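/- arXiv:1912.02127 — 7 statements merged into one kernel-verified Lean document; each statement's English description precedes it below -/
import Mathlib

section
/- For every RDF graph schema S^R, the output SM₁(S^R) of the schema mapping SM₁ is a well-formed property graph schema: its sets of node types, edge types and property types are finite, the functions Θ, Π, Φ are total on their domains, and the partial function Ψ assigns to each node type in its domain a non-empty set of property types such that Ψ(o₁) ∩ Ψ(o₂) = ∅ for distinct o₁, o₂ in its domain. -/
/-! Formalization of RDF databases, Property Graph databases, and the
database mappings DM₁ = (SM₁, IM₁) and DM₂ = (SM₂, IM₂) from
"Mapping RDF Databases to Property Graph Databases". -/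

/-- The ambient context: the sets I (IRIs), L (literals), 𝕃 (labels),
𝕍 (values), 𝕋 (datatypes), the datatype IRIs I_DT, the reserved vocabulary
I_V, the inclusions I ⊆ 𝕃, I ⊆ 𝕍, L ⊆ 𝕍 (with retractions), the
distinguished labels, the datatype `String`, the typing function on values,
and the bijection f : I_DT → 𝕋 with inverse f⁻¹. -/
structure Ctx : Type 1 where
  Iri : Type
  Lit : Type
  Lbl : Type
  Val : Type
  DT : Type
  infIri : Infinite Iri
  infLit : Infinite Lit
  infLbl : Infinite Lbl
  infVal : Infinite Val
  finDT : Finite DT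
  IDT : Set Iri
  IV : Set Iri
  iLbl : Iri → Lbl
  iLbl_inj : Function.Injective iLbl
  lblIri : Lbl → Iri
  lblIri_iLbl : ∀ i, lblIri (iLbl i) = i
  iVal : Iri → Val
  iVal_inj : Function.Injective iVal
  valIri : Val → Iri
  valIri_iVal : ∀ i, valIri (iVal i) = i
  lVal : Lit → Val
  lVal_inj : Function.Injective lVal
  valLit : Val → Lit
  valLit_lVal : ∀ l, valLit (lVal l) = l
  iriLbl : Lbl
  typeLbl : Lbl
  valueLbl : Lbl
  resLbl : Lbl
  litLbl : Lbl
  objLbl : Lbl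
  dtpLbl : Lbl
  iri_ne_type : iriLbl ≠ typeLbl
  iri_ne_value : iriLbl ≠ valueLbl
  type_ne_value : typeLbl ≠ valueLbl
  res_ne_lit : resLbl ≠ litLbl
  obj_ne_dtp : objLbl ≠ dtpLbl
  stringDT : DT
  typeOf : Val → DT
  f : {i : Iri // i ∈ IDT} → DT
  f_bij : Function.Bijective f
  finv : DT → Iri
  finv_mem : ∀ t, finv t ∈ IDT
  f_finv : ∀ t, f ⟨finv t, finv_mem t⟩ = t
  finv_f : ∀ (i : Iri) (h : i ∈ IDT), finv (f ⟨i, h⟩) = i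

/-- An RDF graph: resource nodes `NI`, literal nodes `NL` (disjoint from `NI`
since they are distinct types), object-property edges `EO`, datatype-property
edges `ED` (disjoint), with `aI`/`aL` the IRI/literal assignments, `bO`/`bD`
the incidence functions, and `dI`, `dL`, `dO`, `dD` the components of the
total class-labeling function δ on the disjoint union NI ∪ NL ∪ EO ∪ ED. -/
structure RDFGraph (C : Ctx) : Type 1 where
  NI : Type
  NL : Type
  EO : Type
  ED : Type
  aI : NI → C.Iri
  aL : NL → C.Lit
  bO : EO → NI × NI
  bD : ED → NI × NL
  dI : NI → C.Iri
  dL : NL → C.Iri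
  dO : EO → C.Iri
  dD : ED → C.Iri

/-- Well-formedness of an RDF graph: finite node and edge sets and
injective α_I and α_L (totality and disjointness are built in). -/
def RDFGraph.WF {C : Ctx} (G : RDFGraph C) : Prop :=
  Finite G.NI ∧ Finite G.NL ∧ Finite G.EO ∧ Finite G.ED ∧
    Function.Injective G.aI ∧ Function.Injective G.aL

/-- An RDF graph schema: resource classes `NS`, property classes `ES`,
the class-IRI assignment φ (components `phiN`, `phiE`) and
ϕ(pc) = (dom pc, rng pc). -/
structure RDFSchema (C : Ctx) : Type 1 where
  NS : Type
  ES : Type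
  phiN : NS → C.Iri
  phiE : ES → C.Iri
  dom : ES → NS
  rng : ES → NS

/-- Well-formedness of an RDF graph schema: finiteness, injectivity of φ on
NS ∪ ES, and φ avoiding the reserved vocabulary I_V. -/
def RDFSchema.WF {C : Ctx} (S : RDFSchema C) : Prop :=
  Finite S.NS ∧ Finite S.ES ∧
    Function.Injective (Sum.elim S.phiN S.phiE) ∧
    (∀ x : S.NS ⊕ S.ES, Sum.elim S.phiN S.phiE x ∉ C.IV)

/-- Validity of an RDF graph w.r.t. an RDF graph schema (G^R ⊨ S^R). -/
def RDFValid (C : Ctx) (G : RDFGraph C) (S : RDFSchema C) : Prop :=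
  (∀ r : G.NI, ∃ rc : S.NS, G.dI r = S.phiN rc) ∧
  (∀ l : G.NL, ∃ rc : S.NS, G.dL l = S.phiN rc) ∧
  (∀ e : G.EO, ∃ pc : S.ES, G.dO e = S.phiE pc ∧
      G.dI (G.bO e).1 = S.phiN (S.dom pc) ∧ G.dI (G.bO e).2 = S.phiN (S.rng pc)) ∧
  (∀ e : G.ED, ∃ pc : S.ES, G.dD e = S.phiE pc ∧
      G.dI (G.bD e).1 = S.phiN (S.dom pc) ∧ G.dL (G.bD e).2 = S.phiN (S.rng pc))

/-- A property graph: nodes `N`, edges `E`, properties `P` (mutually disjoint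
since distinct types), label function Γ (`lab`), property assignment Υ (`pv`),
incidence Σ (`ends`), and the partial function Δ (`props`), encoded as a
set-valued function whose domain is `{o | (props o).Nonempty}`. -/
structure PG (C : Ctx) : Type 1 where
  N : Type
  E : Type
  P : Type
  lab : N ⊕ E → C.Lbl
  pv : P → C.Lbl × C.Val
  ends : E → N × N
  props : N ⊕ E → Set P

/-- Well-formedness of a property graph: finite (mutually disjoint) sets of
nodes, edges and properties; Γ, Υ, Σ total (built in); Δ partial into
non-empty sets (built into the encoding) with pairwise disjoint values. -/
def PG.WF {C : Ctx} (G : PG C) : Prop :=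
  Finite G.N ∧ Finite G.E ∧ Finite G.P ∧
    ∀ o₁ o₂ : G.N ⊕ G.E, o₁ ≠ o₂ → Disjoint (G.props o₁) (G.props o₂)

/-- A property graph schema. -/
structure PGSchema (C : Ctx) : Type 1 where
  NT : Type
  ET : Type
  PT : Type
  tlab : NT ⊕ ET → C.Lbl
  tpv : PT → C.Lbl × C.DT
  tends : ET → NT × NT
  tprops : NT ⊕ ET → Set PT

/-- Well-formedness of a property graph schema. -/
def PGSchema.WF {C : Ctx} (S : PGSchema C) : Prop :=
  Finite S.NT ∧ Finite S.ET ∧ Finite S.PT ∧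
    ∀ o₁ o₂ : S.NT ⊕ S.ET, o₁ ≠ o₂ → Disjoint (S.tprops o₁) (S.tprops o₂)

/-- Validity of a property graph w.r.t. a property graph schema (G^P ⊨ S^P). -/
def PGValid (C : Ctx) (G : PG C) (S : PGSchema C) : Prop :=
  (∀ n : G.N, ∃ nt : S.NT,
    G.lab (Sum.inl n) = S.tlab (Sum.inl nt) ∧
    ∀ p ∈ G.props (Sum.inl n), ∃ pt ∈ S.tprops (Sum.inl nt),
      S.tpv pt = ((G.pv p).1, C.typeOf (G.pv p).2)) ∧
  (∀ e : G.E, ∃ (et : S.ET) (nt nt' : S.NT),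
    S.tends et = (nt, nt') ∧
    G.lab (Sum.inr e) = S.tlab (Sum.inr et) ∧
    G.lab (Sum.inl (G.ends e).1) = S.tlab (Sum.inl nt) ∧
    G.lab (Sum.inl (G.ends e).2) = S.tlab (Sum.inl nt') ∧
    ∀ p ∈ G.props (Sum.inr e), ∃ pt ∈ S.tprops (Sum.inr et),
      S.tpv pt = ((G.pv p).1, C.typeOf (G.pv p).2))

/-- The schema mapping SM₁: a node type for each resource class not in I_DT
(each carrying the property type ('iri', String)); for each property class pc
with ϕ(pc) = (rc₁, rc₂): if φ(rc₂) ∈ I_DT, a property type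
(φ(pc), f(φ(rc₂))) attached to nt_{rc₁}; otherwise an edge type labeled φ(pc)
from nt_{rc₁} to nt_{rc₂}. -/
def SM1 (C : Ctx) (S : RDFSchema C) : PGSchema C where
  NT := {rc : S.NS // S.phiN rc ∉ C.IDT}
  ET := {pc : S.ES // S.phiN (S.dom pc) ∉ C.IDT ∧ S.phiN (S.rng pc) ∉ C.IDT}
  PT := {rc : S.NS // S.phiN rc ∉ C.IDT} ⊕
        {pc : S.ES // S.phiN (S.dom pc) ∉ C.IDT ∧ S.phiN (S.rng pc) ∈ C.IDT}
  tlab := Sum.elim (fun nt => C.iLbl (S.phiN nt.1)) (fun et => C.iLbl (S.phiE et.1))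
  tpv := Sum.elim (fun _ => (C.iriLbl, C.stringDT))
    (fun pc => (C.iLbl (S.phiE pc.1), C.f ⟨S.phiN (S.rng pc.1), pc.2.2⟩))
  tends := fun et => (⟨S.dom et.1, et.2.1⟩, ⟨S.rng et.1, et.2.2⟩)
  tprops := Sum.elim
    (fun nt => {pt | match pt with
                     | Sum.inl nt' => nt' = nt
                     | Sum.inr pc => S.dom pc.1 = nt.1})
    (fun _ => ∅)

/-- The instance mapping IM₁: a node n_r (labeled δ(r), carrying the property
('iri', α_I(r))) for each resource node r; a property (δ(dp), α_L(r₂)) on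
n_{r₁} for each datatype-property edge dp with β_D(dp) = (r₁, r₂); an edge
(labeled δ(op), from n_{r₁} to n_{r₂}) for each object-property edge op. -/
def IM1 (C : Ctx) (G : RDFGraph C) : PG C where
  N := G.NI
  E := G.EO
  P := G.NI ⊕ G.ED
  lab := Sum.elim (fun r => C.iLbl (G.dI r)) (fun op => C.iLbl (G.dO op))
  pv := Sum.elim (fun r => (C.iriLbl, C.iVal (G.aI r)))
    (fun dp => (C.iLbl (G.dD dp), C.lVal (G.aL (G.bD dp).2)))
  ends := G.bO
  props := Sum.elim
    (fun n => {p | match p with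
                   | Sum.inl r => r = n
                   | Sum.inr dp => (G.bD dp).1 = n})
    (fun _ => ∅)

/-- The inverse schema mapping SM₁⁻¹. -/
def SM1inv (C : Ctx) (T : PGSchema C) : RDFSchema C where
  NS := {dt : C.DT // ∃ pt : T.PT, (T.tpv pt).1 ≠ C.iriLbl ∧ (T.tpv pt).2 = dt} ⊕ T.NT
  ES := T.ET ⊕ {x : T.NT × T.PT // x.2 ∈ T.tprops (Sum.inl x.1) ∧ (T.tpv x.2).1 ≠ C.iriLbl}
  phiN := Sum.elim (fun dt => C.finv dt.1) (fun nt => C.lblIri (T.tlab (Sum.inl nt)))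
  phiE := Sum.elim (fun et => C.lblIri (T.tlab (Sum.inr et)))
    (fun x => C.lblIri (T.tpv x.1.2).1)
  dom := Sum.elim (fun et => Sum.inr (T.tends et).1) (fun x => Sum.inr x.1.1)
  rng := Sum.elim (fun et => Sum.inr (T.tends et).2)
    (fun x => Sum.inl ⟨(T.tpv x.1.2).2, ⟨x.1.2, x.2.2, rfl⟩⟩)

/-- The (unique, when it exists) value of the property with label `lab`
attached to the object `o`; chosen classically. -/
noncomputable def propVal (C : Ctx) (G : PG C) (o : G.N ⊕ G.E) (lab : C.Lbl) : C.Val :=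
  haveI : Nonempty C.Val := @Infinite.nonempty _ C.infVal
  Classical.epsilon (fun v => ∃ p ∈ G.props o, G.pv p = (lab, v))

/-- The inverse instance mapping IM₁⁻¹. -/
noncomputable def IM1inv (C : Ctx) (G : PG C) : RDFGraph C where
  NI := G.N
  NL := {v : C.Val // ∃ n : G.N, ∃ p ∈ G.props (Sum.inl n),
          (G.pv p).1 ≠ C.iriLbl ∧ (G.pv p).2 = v}
  EO := G.E
  ED := {x : G.N × G.P // x.2 ∈ G.props (Sum.inl x.1) ∧ (G.pv x.2).1 ≠ C.iriLbl}
  aI := fun n => C.valIri (propVal C G (Sum.inl n) C.iriLbl)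
  aL := fun v => C.valLit v.1
  bO := G.ends
  bD := fun x => (x.1.1, ⟨(G.pv x.1.2).2, ⟨x.1.1, x.1.2, x.2.1, x.2.2, rfl⟩⟩)
  dI := fun n => C.lblIri (G.lab (Sum.inl n))
  dL := fun v => C.finv (C.typeOf v.1)
  dO := fun e => C.lblIri (G.lab (Sum.inr e))
  dD := fun x => C.lblIri (G.pv x.1.2).1

/-- The instance mapping IM₂ (schema-independent). -/
def IM2 (C : Ctx) (G : RDFGraph C) : PG C where
  N := G.NI ⊕ G.NL
  E := G.EO ⊕ G.ED
  P := ((G.NI ⊕ G.NL) × Bool) ⊕ (G.EO ⊕ G.ED)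
  lab := Sum.elim
    (Sum.elim (fun _ => C.resLbl) (fun _ => C.litLbl))
    (Sum.elim (fun _ => C.objLbl) (fun _ => C.dtpLbl))
  pv := fun p => match p with
    | Sum.inl (Sum.inl r, false) => (C.iriLbl, C.iVal (G.aI r))
    | Sum.inl (Sum.inl r, true) => (C.typeLbl, C.iVal (G.dI r))
    | Sum.inl (Sum.inr l, false) => (C.valueLbl, C.lVal (G.aL l))
    | Sum.inl (Sum.inr l, true) => (C.typeLbl, C.iVal (G.dL l))
    | Sum.inr (Sum.inl op) => (C.typeLbl, C.iVal (G.dO op))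
    | Sum.inr (Sum.inr dp) => (C.typeLbl, C.iVal (G.dD dp))
  ends := Sum.elim
    (fun op => (Sum.inl (G.bO op).1, Sum.inl (G.bO op).2))
    (fun dp => (Sum.inl (G.bD dp).1, Sum.inr (G.bD dp).2))
  props := Sum.elim
    (fun n => {p | ∃ b, p = Sum.inl (n, b)})
    (fun e => {p | p = Sum.inr e})

/-- The generic property graph schema S*: node types `Resource` (false) and
`Literal` (true); edge types `ObjectProperty` (false) and `DatatypeProperty`
(true); property types 0 = ('iri',String), 1 = ('type',String) on Resource,
2 = ('value',String), 3 = ('type',String) on Literal, 4 = ('type',String) on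
ObjectProperty, 5 = ('type',String) on DatatypeProperty. -/
def genericSchema (C : Ctx) : PGSchema C where
  NT := Bool
  ET := Bool
  PT := Fin 6
  tlab := Sum.elim (fun b => cond b C.litLbl C.resLbl)
    (fun b => cond b C.dtpLbl C.objLbl)
  tpv := fun i =>
    (if i = 0 then C.iriLbl else if i = 2 then C.valueLbl else C.typeLbl, C.stringDT)
  tends := fun b => (false, b)
  tprops := Sum.elim
    (fun b => cond b ({2, 3} : Set (Fin 6)) ({0, 1} : Set (Fin 6)))
    (fun b => cond b ({5} : Set (Fin 6)) ({4} : Set (Fin 6)))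

theorem valid_src (C : Ctx) (G : PG C) (hv : PGValid C G (genericSchema C)) (e : G.E) :
    G.lab (Sum.inl (G.ends e).1) = C.resLbl := by
  obtain ⟨et, nt, nt', hends, _, h1, _, _⟩ := hv.2 e
  have hnt : nt = false := by
    have h := congrArg Prod.fst hends
    simpa [genericSchema] using h.symm
  subst hnt
  simpa [genericSchema] using h1

theorem valid_tgt_obj (C : Ctx) (G : PG C) (hv : PGValid C G (genericSchema C)) (e : G.E)
    (he : G.lab (Sum.inr e) = C.objLbl) :
    G.lab (Sum.inl (G.ends e).2) = C.resLbl := by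
  obtain ⟨et, nt, nt', hends, hlabe, _, h2, _⟩ := hv.2 e
  have h : et = nt' := by
    have h := congrArg Prod.snd hends
    simpa [genericSchema] using h
  cases et with
  | true =>
      exfalso
      apply C.obj_ne_dtp
      rw [← he, hlabe]
      simp [genericSchema]
  | false =>
      rw [← h] at h2
      simpa [genericSchema] using h2

theorem valid_tgt_dtp (C : Ctx) (G : PG C) (hv : PGValid C G (genericSchema C)) (e : G.E)
    (he : G.lab (Sum.inr e) = C.dtpLbl) :
    G.lab (Sum.inl (G.ends e).2) = C.litLbl := by
  obtain ⟨et, nt, nt', hends, hlabe, _, h2, _⟩ := hv.2 e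
  have h : et = nt' := by
    have h := congrArg Prod.snd hends
    simpa [genericSchema] using h
  cases et with
  | false =>
      exfalso
      apply C.obj_ne_dtp
      have : G.lab (Sum.inr e) = C.objLbl := by
        rw [hlabe]; simp [genericSchema]
      rw [← this, he]
  | true =>
      rw [← h] at h2
      simpa [genericSchema] using h2

/-- The inverse instance mapping IM₂⁻¹, defined on property graphs that are
valid with respect to the generic schema S*. -/
noncomputable def IM2inv (C : Ctx) (G : PG C) (hv : PGValid C G (genericSchema C)) :
    RDFGraph C where
  NI := {n : G.N // G.lab (Sum.inl n) = C.resLbl}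
  NL := {n : G.N // G.lab (Sum.inl n) = C.litLbl}
  EO := {e : G.E // G.lab (Sum.inr e) = C.objLbl}
  ED := {e : G.E // G.lab (Sum.inr e) = C.dtpLbl}
  aI := fun n => C.valIri (propVal C G (Sum.inl n.1) C.iriLbl)
  aL := fun n => C.valLit (propVal C G (Sum.inl n.1) C.valueLbl)
  bO := fun e => (⟨(G.ends e.1).1, valid_src C G hv e.1⟩,
                  ⟨(G.ends e.1).2, valid_tgt_obj C G hv e.1 e.2⟩)
  bD := fun e => (⟨(G.ends e.1).1, valid_src C G hv e.1⟩,
                  ⟨(G.ends e.1).2, valid_tgt_dtp C G hv e.1 e.2⟩)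
  dI := fun n => C.valIri (propVal C G (Sum.inl n.1) C.typeLbl)
  dL := fun n => C.valIri (propVal C G (Sum.inl n.1) C.typeLbl)
  dO := fun e => C.valIri (propVal C G (Sum.inr e.1) C.typeLbl)
  dD := fun e => C.valIri (propVal C G (Sum.inr e.1) C.typeLbl)

/-- An isomorphism of RDF graphs: bijections between the corresponding node
and edge sets commuting with α_I, α_L, β_O, β_D and δ. -/
structure RDFIso (C : Ctx) (G₁ G₂ : RDFGraph C) : Type where
  eNI : G₁.NI ≃ G₂.NI
  eNL : G₁.NL ≃ G₂.NL
  eEO : G₁.EO ≃ G₂.EO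
  eED : G₁.ED ≃ G₂.ED
  haI : ∀ r, G₂.aI (eNI r) = G₁.aI r
  haL : ∀ l, G₂.aL (eNL l) = G₁.aL l
  hbO : ∀ e, G₂.bO (eEO e) = (eNI (G₁.bO e).1, eNI (G₁.bO e).2)
  hbD : ∀ e, G₂.bD (eED e) = (eNI (G₁.bD e).1, eNL (G₁.bD e).2)
  hdI : ∀ r, G₂.dI (eNI r) = G₁.dI r
  hdL : ∀ l, G₂.dL (eNL l) = G₁.dL l
  hdO : ∀ e, G₂.dO (eEO e) = G₁.dO e
  hdD : ∀ e, G₂.dD (eED e) = G₁.dD e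

/-- An isomorphism of RDF graph schemas: bijections on resource classes and
property classes commuting with φ and ϕ. -/
structure RDFSchemaIso (C : Ctx) (S₁ S₂ : RDFSchema C) : Type where
  eNS : S₁.NS ≃ S₂.NS
  eES : S₁.ES ≃ S₂.ES
  hphiN : ∀ rc, S₂.phiN (eNS rc) = S₁.phiN rc
  hphiE : ∀ pc, S₂.phiE (eES pc) = S₁.phiE pc
  hdom : ∀ pc, S₂.dom (eES pc) = eNS (S₁.dom pc)
  hrng : ∀ pc, S₂.rng (eES pc) = eNS (S₁.rng pc)

/-- An isomorphism of property graphs: bijections on nodes, edges and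
properties commuting with Γ, Υ, Σ and Δ. -/
structure PGIso (C : Ctx) (G₁ G₂ : PG C) : Type where
  eN : G₁.N ≃ G₂.N
  eE : G₁.E ≃ G₂.E
  eP : G₁.P ≃ G₂.P
  hlab : ∀ o, G₂.lab (Equiv.sumCongr eN eE o) = G₁.lab o
  hpv : ∀ p, G₂.pv (eP p) = G₁.pv p
  hends : ∀ e, G₂.ends (eE e) = (eN (G₁.ends e).1, eN (G₁.ends e).2)
  hprops : ∀ o p, eP p ∈ G₂.props (Equiv.sumCongr eN eE o) ↔ p ∈ G₁.props o

/-- An isomorphism of property graph schemas: bijections on node types, edge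
types and property types commuting with Θ, Π, Φ and Ψ. -/
structure PGSchemaIso (C : Ctx) (S₁ S₂ : PGSchema C) : Type where
  eNT : S₁.NT ≃ S₂.NT
  eET : S₁.ET ≃ S₂.ET
  ePT : S₁.PT ≃ S₂.PT
  htlab : ∀ o, S₂.tlab (Equiv.sumCongr eNT eET o) = S₁.tlab o
  htpv : ∀ pt, S₂.tpv (ePT pt) = S₁.tpv pt
  htends : ∀ et, S₂.tends (eET et) = (eNT (S₁.tends et).1, eNT (S₁.tends et).2)
  htprops : ∀ o pt, ePT pt ∈ S₂.tprops (Equiv.sumCongr eNT eET o) ↔ pt ∈ S₁.tprops o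

/-! Finiteness of the node, edge and property types of SM₁(S^R) is inherited from that of the
resource and property classes. Every property type of SM₁(S^R) is attached to exactly one node
type (`('iri', String)` to `nt_rc`, a datatype property class to the node type of its domain) and
no edge type carries any, so Ψ is the fibre map of this attachment function, and fibres of a
function are pairwise disjoint. -/

theorem PGSchema.wf_of_tprops_eq_preimage {C : Ctx} (T : PGSchema C) [Finite T.NT]
    [Finite T.ET] [Finite T.PT] (owner : T.PT → T.NT ⊕ T.ET)
    (h : ∀ o, T.tprops o = owner ⁻¹' {o}) : T.WF :=
  ⟨‹_›, ‹_›, ‹_›, fun o₁ o₂ hne => by rw [h, h]; exact pairwise_disjoint_fiber owner hne⟩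

section SM1

variable (C : Ctx) (S : RDFSchema C)

instance SM1.finite_NT [Finite S.NS] : Finite (SM1 C S).NT := Subtype.finite

instance SM1.finite_ET [Finite S.ES] : Finite (SM1 C S).ET := Subtype.finite

instance SM1.finite_PT [Finite S.NS] [Finite S.ES] : Finite (SM1 C S).PT := Finite.instSum

def SM1.holder : (SM1 C S).PT → (SM1 C S).NT :=
  Sum.elim id fun pc => ⟨S.dom pc.1, pc.2.1⟩

theorem SM1_mem_tprops_inl {nt : (SM1 C S).NT} {pt : (SM1 C S).PT} :
    pt ∈ (SM1 C S).tprops (Sum.inl nt) ↔ SM1.holder C S pt = nt := by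
  rcases pt with nt' | pc
  · exact Iff.rfl
  · exact (Subtype.ext_iff (a1 := SM1.holder C S (Sum.inr pc)) (a2 := nt)).symm

theorem SM1_tprops_eq_preimage_holder (o : (SM1 C S).NT ⊕ (SM1 C S).ET) :
    (SM1 C S).tprops o = (Sum.inl ∘ SM1.holder C S) ⁻¹' {o} := by
  ext pt
  rcases o with nt | et
  · exact (SM1_mem_tprops_inl C S).trans Sum.inl_injective.eq_iff.symm
  · exact iff_of_false (Set.notMem_empty pt) Sum.inl_ne_inr

end SM1

/-- For every RDF graph schema S^R, the output SM₁(S^R) is a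
well-formed property graph schema (finite sets of node, edge and property
types, total Θ, Π, Φ, and Ψ partial into non-empty pairwise-disjoint sets of
property types; totality and non-emptiness-on-the-domain are built into the
encoding). -/
theorem sm1_wellformed (C : Ctx) (S : RDFSchema C) (hS : S.WF) :
    (SM1 C S).WF := by
  obtain ⟨hNS, hES, -, -⟩ := hS
  exact (SM1 C S).wf_of_tprops_eq_preimage _ (SM1_tprops_eq_preimage_holder C S)
end

section
/- For every RDF graph G^R, the output IM₁(G^R) of the instance mapping IM₁ is a well-formed property graph: its sets of nodes, edges and properties are finite and mutually disjoint, the functions Γ, Υ, Σ are total, and the partial function Δ assigns to each node in its domain a non-empty set of properties such that Δ(o₁) ∩ Δ(o₂) = ∅ for distinct o₁, o₂ in its domain. -/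
open Function in
theorem pairwise_disjoint_sumElim_empty {α β γ : Type*} {f : α → Set γ}
    (hf : Pairwise (Disjoint on f)) :
    Pairwise (Disjoint on Sum.elim f fun _ : β => (∅ : Set γ)) := by
  rintro (a₁ | b₁) (a₂ | b₂) hne
  · exact hf fun h => hne (congrArg Sum.inl h)
  · exact Set.disjoint_empty _
  · exact Set.empty_disjoint _
  · exact Set.empty_disjoint _

def RDFGraph.propOwner {C : Ctx} (G : RDFGraph C) : G.NI ⊕ G.ED → G.NI :=
  Sum.elim id fun dp => (G.bD dp).1

theorem IM1_props (C : Ctx) (G : RDFGraph C) :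
    (IM1 C G).props = Sum.elim (fun n => G.propOwner ⁻¹' {n}) fun _ => ∅ := by
  funext o
  rcases o with n | op
  · ext (r | dp) <;> rfl
  · rfl

/-- For every RDF graph G^R, the output IM₁(G^R) is a
well-formed property graph (finite mutually disjoint sets of nodes, edges and
properties, total Γ, Υ, Σ, and Δ partial into non-empty pairwise-disjoint
sets of properties; totality, mutual disjointness of the carrier sets and
non-emptiness-on-the-domain are built into the encoding). -/
theorem im1_wellformed (C : Ctx) (G : RDFGraph C) (hG : G.WF) :
    (IM1 C G).WF := by
  obtain ⟨hNI, -, hEO, hED, -, -⟩ := hG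
  refine ⟨hNI, hEO, inferInstanceAs (Finite (G.NI ⊕ G.ED)), ?_⟩
  rw [IM1_props]
  exact pairwise_disjoint_sumElim_empty (pairwise_disjoint_fiber G.propOwner)
end

section
/- The database mapping DM₁ = (SM₁, IM₁) is semantics preserving: for every RDF database (S^R, G^R) with G^R ⊨ S^R, such that for every literal node l of G^R one has δ(l) ∈ I_DT and type(α_L(l)) = f(δ(l)), for every resource node r one has δ(r) ∉ I_DT, and type(u) = String for every IRI u regarded as a value, the property graph IM₁(G^R) is valid with respect to the property graph schema SM₁(S^R); hence (SM₁(S^R), IM₁(G^R)) is a valid property graph database. -/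
/-! Every piece of IM₁(G) is typed through the RDF validity witness of its source. A resource node
`r` with δ(r) = φ(rc) gets the node type of `rc` (present since δ(r) ∉ I_DT). A datatype edge of
class `pc` leaving `r` ends in a literal, so φ(rng pc) ∈ I_DT and `pc` became a property type of
the node type of `dom pc`, which is `rc` by injectivity of φ; the literal's value has type
f(δ(l)) = f(φ(rng pc)). An object edge joins two resource nodes, so its class became an edge
type. The Δ and Ψ of both constructions are disjoint because each property has a single owner. -/

theorem pairwise_disjoint_of_subset_fiber {ι P : Type*} {s : ι → Set P} (owner : P → ι)
    (hs : ∀ i, s i ⊆ owner ⁻¹' {i}) : Pairwise (Function.onFun Disjoint s) :=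
  (pairwise_disjoint_fiber owner).mono fun i j h => h.mono (hs i) (hs j)

theorem SM1_wf (C : Ctx) (S : RDFSchema C) [Finite S.NS] [Finite S.ES] : (SM1 C S).WF := by
  refine ⟨Subtype.finite, Subtype.finite, Finite.instSum, ?_⟩
  refine pairwise_disjoint_of_subset_fiber
    (Sum.elim Sum.inl fun pc => Sum.inl ⟨S.dom pc.1, pc.2.1⟩) ?_
  rintro (nt | et) (nt' | pc) h
  · exact congrArg Sum.inl h
  · exact congrArg Sum.inl (Subtype.ext h)
  · exact h.elim
  · exact h.elim

theorem IM1_wf (C : Ctx) (G : RDFGraph C) [Finite G.NI] [Finite G.EO] [Finite G.ED] :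
    (IM1 C G).WF := by
  refine ⟨‹_›, ‹_›, Finite.instSum, ?_⟩
  refine pairwise_disjoint_of_subset_fiber
    (Sum.elim Sum.inl fun dp => Sum.inl (G.bD dp).1) ?_
  rintro (n | e) (r | dp) h
  · exact congrArg Sum.inl h
  · exact congrArg Sum.inl h
  · exact h.elim
  · exact h.elim

section Validity

variable (C : Ctx) (S : RDFSchema C) (G : RDFGraph C)

theorem SM1_IM1_node_valid (hφ : Function.Injective S.phiN) (hval : RDFValid C G S)
    (hlit_dt : ∀ l : G.NL, G.dL l ∈ C.IDT)
    (hlit_type : ∀ l : G.NL, C.typeOf (C.lVal (G.aL l)) = C.f ⟨G.dL l, hlit_dt l⟩)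
    (hres : ∀ r : G.NI, G.dI r ∉ C.IDT)
    (hiri_type : ∀ i : C.Iri, C.typeOf (C.iVal i) = C.stringDT) (n : G.NI) :
    ∃ nt : (SM1 C S).NT,
      (IM1 C G).lab (Sum.inl n) = (SM1 C S).tlab (Sum.inl nt) ∧
      ∀ p ∈ (IM1 C G).props (Sum.inl n), ∃ pt ∈ (SM1 C S).tprops (Sum.inl nt),
        (SM1 C S).tpv pt = (((IM1 C G).pv p).1, C.typeOf ((IM1 C G).pv p).2) := by
  obtain ⟨rc, hrc⟩ := hval.1 n
  have hrc_dt : S.phiN rc ∉ C.IDT := hrc ▸ hres n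
  refine ⟨⟨rc, hrc_dt⟩, congrArg C.iLbl hrc, ?_⟩
  rintro (r | dp) (hp : _ = n)
  · exact ⟨Sum.inl ⟨rc, hrc_dt⟩, rfl, by simp [IM1, SM1, hiri_type]⟩
  · obtain ⟨pc, hpc, hdom, hrng⟩ := hval.2.2.2 dp
    have hrng_dt : S.phiN (S.rng pc) ∈ C.IDT := hrng ▸ hlit_dt (G.bD dp).2
    refine ⟨Sum.inr ⟨pc, hdom ▸ hres _, hrng_dt⟩, hφ (by rw [← hdom, hp, hrc]), ?_⟩
    simp only [IM1, SM1, Sum.elim_inr, hlit_type, hpc]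
    congr 2
    exact Subtype.ext hrng.symm

theorem SM1_IM1_edge_valid (hval : RDFValid C G S) (hres : ∀ r : G.NI, G.dI r ∉ C.IDT)
    (e : G.EO) :
    ∃ (et : (SM1 C S).ET) (nt nt' : (SM1 C S).NT),
      (SM1 C S).tends et = (nt, nt') ∧
      (IM1 C G).lab (Sum.inr e) = (SM1 C S).tlab (Sum.inr et) ∧
      (IM1 C G).lab (Sum.inl ((IM1 C G).ends e).1) = (SM1 C S).tlab (Sum.inl nt) ∧
      (IM1 C G).lab (Sum.inl ((IM1 C G).ends e).2) = (SM1 C S).tlab (Sum.inl nt') ∧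
      ∀ p ∈ (IM1 C G).props (Sum.inr e), ∃ pt ∈ (SM1 C S).tprops (Sum.inr et),
        (SM1 C S).tpv pt = (((IM1 C G).pv p).1, C.typeOf ((IM1 C G).pv p).2) := by
  obtain ⟨pc, hpc, hdom, hrng⟩ := hval.2.2.1 e
  exact ⟨⟨pc, hdom ▸ hres _, hrng ▸ hres _⟩, _, _, rfl, congrArg C.iLbl hpc,
    congrArg C.iLbl hdom, congrArg C.iLbl hrng, fun _ h => h.elim⟩

end Validity

/-- The database mapping DM₁ = (SM₁, IM₁) is semantics
preserving: for every RDF database (S^R, G^R) with G^R ⊨ S^R, such that every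
literal node l has δ(l) ∈ I_DT and type(α_L(l)) = f(δ(l)), every resource
node r has δ(r) ∉ I_DT, and type(u) = String for every IRI u regarded as a
value, the property graph IM₁(G^R) is valid with respect to SM₁(S^R); hence
(SM₁(S^R), IM₁(G^R)) is a valid property graph database. -/
theorem dm1_semantics_preserving (C : Ctx) (S : RDFSchema C) (G : RDFGraph C)
    (hS : S.WF) (hG : G.WF) (hval : RDFValid C G S)
    (hlit_dt : ∀ l : G.NL, G.dL l ∈ C.IDT)
    (hlit_type : ∀ l : G.NL, C.typeOf (C.lVal (G.aL l)) = C.f ⟨G.dL l, hlit_dt l⟩)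
    (hres : ∀ r : G.NI, G.dI r ∉ C.IDT)
    (hiri_type : ∀ i : C.Iri, C.typeOf (C.iVal i) = C.stringDT) :
    (SM1 C S).WF ∧ (IM1 C G).WF ∧ PGValid C (IM1 C G) (SM1 C S) := by
  obtain ⟨_, _, hφ, -⟩ := hS
  obtain ⟨_, -, _, _, -⟩ := hG
  exact ⟨SM1_wf C S, IM1_wf C G,
    SM1_IM1_node_valid C S G (hφ.comp Sum.inl_injective) hval hlit_dt hlit_type hres hiri_type,
    SM1_IM1_edge_valid C S G hval hres⟩
end

section
/- Schema recovery for DM₁: let S^R = (N_S, E_S, φ, ϕ) be an RDF graph schema such that φ is injective, no class has IRI 'iri', and every resource class rc with φ(rc) ∈ I_DT occurs as the second component of ϕ(pc) for at least one property class pc. Then SM₁⁻¹(SM₁(S^R)) is isomorphic to S^R, i.e., there are bijections between the resource classes and between the property classes of SM₁⁻¹(SM₁(S^R)) and those of S^R commuting with φ and ϕ. -/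
/-!
SM₁ keeps each resource class outside I_DT as a node type and each property class either as an
edge type or, when its range is a datatype class, as a property type of the node type of its
domain; SM₁⁻¹ reads these back as the same classes. A datatype class rc comes back as the
datatype f(φ(rc)), which occurs in SM₁(S^R) because some property class has range rc; since φ
and f are injective this recovers rc uniquely, and since no class has IRI 'iri' the
('iri', String) property types produce no spurious classes.
-/

namespace RDFSchemaIso

variable {C : Ctx} {S₁ S₂ : RDFSchema C}

def symm (e : RDFSchemaIso C S₁ S₂) : RDFSchemaIso C S₂ S₁ where
  eNS := e.eNS.symm
  eES := e.eES.symm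
  hphiN rc := by rw [← e.hphiN, Equiv.apply_symm_apply]
  hphiE pc := by rw [← e.hphiE, Equiv.apply_symm_apply]
  hdom pc := by rw [e.eNS.eq_symm_apply, ← e.hdom, Equiv.apply_symm_apply]
  hrng pc := by rw [e.eNS.eq_symm_apply, ← e.hrng, Equiv.apply_symm_apply]

noncomputable def ofBijective (gN : S₁.NS → S₂.NS) (gE : S₁.ES → S₂.ES)
    (hgN : Function.Bijective gN) (hgE : Function.Bijective gE)
    (hphiN : ∀ rc, S₂.phiN (gN rc) = S₁.phiN rc) (hphiE : ∀ pc, S₂.phiE (gE pc) = S₁.phiE pc)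
    (hdom : ∀ pc, S₂.dom (gE pc) = gN (S₁.dom pc))
    (hrng : ∀ pc, S₂.rng (gE pc) = gN (S₁.rng pc)) : RDFSchemaIso C S₁ S₂ where
  eNS := Equiv.ofBijective gN hgN
  eES := Equiv.ofBijective gE hgE
  hphiN := hphiN
  hphiE := hphiE
  hdom := hdom
  hrng := hrng

end RDFSchemaIso

section RoundTrip

variable {C : Ctx} {S : RDFSchema C} (hiri : ∀ pc : S.ES, C.iLbl (S.phiE pc) ≠ C.iriLbl)
    (hdom : ∀ pc : S.ES, S.phiN (S.dom pc) ∉ C.IDT)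
    (hdt_used : ∀ rc : S.NS, S.phiN rc ∈ C.IDT → ∃ pc : S.ES, S.rng pc = rc)

open Classical in
noncomputable def sm1RoundTripNS (rc : S.NS) : (SM1inv C (SM1 C S)).NS :=
  if h : S.phiN rc ∈ C.IDT then
    Sum.inl ⟨C.f ⟨S.phiN rc, h⟩, by
      obtain ⟨pc, rfl⟩ := hdt_used rc h
      exact ⟨Sum.inr ⟨pc, hdom pc, h⟩, hiri pc, rfl⟩⟩
  else Sum.inr ⟨rc, h⟩

open Classical in
noncomputable def sm1RoundTripES (pc : S.ES) : (SM1inv C (SM1 C S)).ES :=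
  if h : S.phiN (S.rng pc) ∈ C.IDT then
    Sum.inr ⟨(⟨S.dom pc, hdom pc⟩, Sum.inr ⟨pc, hdom pc, h⟩), rfl, hiri pc⟩
  else Sum.inl ⟨pc, hdom pc, h⟩

theorem phiN_sm1RoundTripNS (rc : S.NS) :
    (SM1inv C (SM1 C S)).phiN (sm1RoundTripNS hiri hdom hdt_used rc) = S.phiN rc := by
  by_cases h : S.phiN rc ∈ C.IDT <;> simp only [sm1RoundTripNS, h, ↓reduceDIte]
  · exact C.finv_f _ h
  · exact C.lblIri_iLbl _

theorem phiE_sm1RoundTripES (pc : S.ES) :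
    (SM1inv C (SM1 C S)).phiE (sm1RoundTripES hiri hdom pc) = S.phiE pc := by
  by_cases h : S.phiN (S.rng pc) ∈ C.IDT <;> simp only [sm1RoundTripES, h, ↓reduceDIte] <;>
    exact C.lblIri_iLbl _

theorem dom_sm1RoundTripES (pc : S.ES) :
    (SM1inv C (SM1 C S)).dom (sm1RoundTripES hiri hdom pc) =
      sm1RoundTripNS hiri hdom hdt_used (S.dom pc) := by
  by_cases h : S.phiN (S.rng pc) ∈ C.IDT <;>
    simp only [sm1RoundTripES, sm1RoundTripNS, h, hdom pc, ↓reduceDIte] <;> rfl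

theorem rng_sm1RoundTripES (pc : S.ES) :
    (SM1inv C (SM1 C S)).rng (sm1RoundTripES hiri hdom pc) =
      sm1RoundTripNS hiri hdom hdt_used (S.rng pc) := by
  by_cases h : S.phiN (S.rng pc) ∈ C.IDT <;>
    simp only [sm1RoundTripES, sm1RoundTripNS, h, ↓reduceDIte] <;> rfl

theorem sm1RoundTripNS_bijective (hinj : Function.Injective S.phiN) :
    Function.Bijective (sm1RoundTripNS hiri hdom hdt_used) := by
  refine ⟨fun a b hab => hinj ?_, ?_⟩
  · rw [← phiN_sm1RoundTripNS hiri hdom hdt_used, hab, phiN_sm1RoundTripNS]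
  · rintro (⟨dt, pt | pt, hne, rfl⟩ | nt)
    · exact absurd rfl hne
    · refine ⟨S.rng pt.1, ?_⟩
      simp only [sm1RoundTripNS, pt.2.2, ↓reduceDIte]
      rfl
    · refine ⟨nt.1, ?_⟩
      simp only [sm1RoundTripNS, nt.2, ↓reduceDIte]
      rfl

theorem sm1RoundTripES_bijective :
    Function.Bijective (sm1RoundTripES hiri hdom) := by
  refine ⟨fun a b hab => ?_, ?_⟩
  · by_cases ha : S.phiN (S.rng a) ∈ C.IDT <;> by_cases hb : S.phiN (S.rng b) ∈ C.IDT <;>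
      simp only [sm1RoundTripES, ha, hb, ↓reduceDIte] at hab
    · have hpt := congrArg Prod.snd (congrArg Subtype.val (Sum.inr.inj hab))
      exact congrArg Subtype.val (Sum.inr.inj hpt)
    · cases hab
    · cases hab
    · exact congrArg Subtype.val (Sum.inl.inj hab)
  · rintro (et | ⟨⟨nt, pt | pt⟩, hmem, hne⟩)
    · refine ⟨et.1, ?_⟩
      simp only [sm1RoundTripES, et.2.2, ↓reduceDIte]
      rfl
    · exact absurd rfl hne
    · refine ⟨pt.1, ?_⟩
      obtain rfl : ⟨S.dom pt.1, hdom pt.1⟩ = nt := Subtype.ext hmem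
      simp only [sm1RoundTripES, pt.2.2, ↓reduceDIte]
      rfl

end RoundTrip

/-- Schema recovery for DM₁: if S^R is an RDF graph schema such
that φ is injective (part of well-formedness), no class has IRI 'iri',
domains of property classes are not datatype classes (the implicit
presupposition making SM₁ well-defined), and every resource class rc with
φ(rc) ∈ I_DT occurs as the second component of ϕ(pc) for some property class
pc, then SM₁⁻¹(SM₁(S^R)) is isomorphic to S^R. -/
theorem sm1_schema_recovery (C : Ctx) (S : RDFSchema C) (hS : S.WF)
    (hiri : ∀ x : S.NS ⊕ S.ES, C.iLbl (Sum.elim S.phiN S.phiE x) ≠ C.iriLbl)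
    (hdom : ∀ pc : S.ES, S.phiN (S.dom pc) ∉ C.IDT)
    (hdt_used : ∀ rc : S.NS, S.phiN rc ∈ C.IDT → ∃ pc : S.ES, S.rng pc = rc) :
    Nonempty (RDFSchemaIso C (SM1inv C (SM1 C S)) S) := by
  have hiriE : ∀ pc : S.ES, C.iLbl (S.phiE pc) ≠ C.iriLbl := fun pc => hiri (Sum.inr pc)
  have hinj : Function.Injective S.phiN := hS.2.2.1.comp Sum.inl_injective
  exact ⟨(RDFSchemaIso.ofBijective _ _
    (sm1RoundTripNS_bijective hiriE hdom hdt_used hinj) (sm1RoundTripES_bijective hiriE hdom)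
    (phiN_sm1RoundTripNS hiriE hdom hdt_used) (phiE_sm1RoundTripES hiriE hdom)
    (dom_sm1RoundTripES hiriE hdom hdt_used) (rng_sm1RoundTripES hiriE hdom hdt_used)).symm⟩
end

section
/- Instance recovery for DM₁: let G^R be an RDF graph such that every literal node is the target of at least one datatype-property edge, type(α_L(l)) = f(δ(l)) for every literal node l, and no datatype-property edge has class label 'iri'. Then IM₁⁻¹(IM₁(G^R)) is isomorphic to G^R, i.e., there are bijections between the resource nodes, literal nodes, object-property edges and datatype-property edges of IM₁⁻¹(IM₁(G^R)) and those of G^R commuting with α_I, α_L, β_O, β_D and δ. -/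
/-! IM₁ keeps resource nodes and object-property edges as they are and turns every
datatype-property edge `dp` into a property of the node `n_{r₁}`; IM₁⁻¹ reads that property
back as the edge `(n_{r₁}, dp)` and its value as a literal node. Since no datatype-property edge
is labelled 'iri', the property ('iri', α_I(r)) is the only one carrying that label, so α_I is
recovered; the literal nodes come back through their (injective) values because every literal
is the target of some edge, and their class labels come back because f⁻¹ ∘ type inverts
f on their datatype IRIs. -/

def RDFIso.symm {C : Ctx} {G₁ G₂ : RDFGraph C} (e : RDFIso C G₁ G₂) : RDFIso C G₂ G₁ where
  eNI := e.eNI.symm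
  eNL := e.eNL.symm
  eEO := e.eEO.symm
  eED := e.eED.symm
  haI r := by simpa using (e.haI (e.eNI.symm r)).symm
  haL l := by simpa using (e.haL (e.eNL.symm l)).symm
  hbO o := by
    simpa [Prod.map] using congrArg (Prod.map e.eNI.symm e.eNI.symm) (e.hbO (e.eEO.symm o)).symm
  hbD d := by
    simpa [Prod.map] using congrArg (Prod.map e.eNI.symm e.eNL.symm) (e.hbD (e.eED.symm d)).symm
  hdI r := by simpa using (e.hdI (e.eNI.symm r)).symm
  hdL l := by simpa using (e.hdL (e.eNL.symm l)).symm
  hdO o := by simpa using (e.hdO (e.eEO.symm o)).symm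
  hdD d := by simpa using (e.hdD (e.eED.symm d)).symm

theorem propVal_eq_of_forall {C : Ctx} {G : PG C} {o : G.N ⊕ G.E} {lab : C.Lbl} {v : C.Val}
    (hex : ∃ p ∈ G.props o, G.pv p = (lab, v))
    (huniq : ∀ p ∈ G.props o, (G.pv p).1 = lab → (G.pv p).2 = v) :
    propVal C G o lab = v := by
  have : Nonempty C.Val := @Infinite.nonempty _ C.infVal
  obtain ⟨p, hp, hpv⟩ :=
    Classical.epsilon_spec (⟨v, hex⟩ : ∃ w, ∃ p ∈ G.props o, G.pv p = (lab, w))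
  rw [← huniq p hp (congrArg Prod.fst hpv)]
  exact (congrArg Prod.snd hpv).symm

namespace IM1

variable {C : Ctx} {G : RDFGraph C}

theorem propVal_iri (hdp : ∀ dp : G.ED, C.iLbl (G.dD dp) ≠ C.iriLbl) (r : G.NI) :
    propVal C (IM1 C G) (Sum.inl r) C.iriLbl = C.iVal (G.aI r) := by
  refine propVal_eq_of_forall ⟨Sum.inl r, rfl, rfl⟩ ?_
  rintro (r' | dp) hp hlab
  · cases (hp : r' = r)
    rfl
  · exact absurd hlab (hdp dp)

def litNode (hused : ∀ l : G.NL, ∃ dp : G.ED, (G.bD dp).2 = l)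
    (hdp : ∀ dp : G.ED, C.iLbl (G.dD dp) ≠ C.iriLbl) (l : G.NL) :
    (IM1inv C (IM1 C G)).NL :=
  ⟨C.lVal (G.aL l), by
    obtain ⟨dp, rfl⟩ := hused l
    exact ⟨(G.bD dp).1, Sum.inr dp, rfl, hdp dp, rfl⟩⟩

theorem litNode_bijective (hinj : Function.Injective G.aL)
    (hused : ∀ l : G.NL, ∃ dp : G.ED, (G.bD dp).2 = l)
    (hdp : ∀ dp : G.ED, C.iLbl (G.dD dp) ≠ C.iriLbl) :
    Function.Bijective (litNode hused hdp) := by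
  refine ⟨fun l₁ l₂ h => hinj (C.lVal_inj (congrArg Subtype.val h)), ?_⟩
  rintro ⟨v, n, r | dp, hp, hne, rfl⟩
  · exact absurd rfl hne
  · exact ⟨(G.bD dp).2, rfl⟩

def dpEdge (hdp : ∀ dp : G.ED, C.iLbl (G.dD dp) ≠ C.iriLbl) (dp : G.ED) :
    (IM1inv C (IM1 C G)).ED :=
  ⟨((G.bD dp).1, Sum.inr dp), rfl, hdp dp⟩

theorem dpEdge_bijective (hdp : ∀ dp : G.ED, C.iLbl (G.dD dp) ≠ C.iriLbl) :
    Function.Bijective (dpEdge hdp) := by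
  refine ⟨fun dp₁ dp₂ h => Sum.inr_injective (congrArg (·.1.2) h), ?_⟩
  rintro ⟨⟨n, r | dp⟩, hp, hne⟩
  · exact absurd rfl hne
  · cases (hp : (G.bD dp).1 = n)
    exact ⟨dp, rfl⟩

noncomputable def recoveryIso (hinj : Function.Injective G.aL)
    (hused : ∀ l : G.NL, ∃ dp : G.ED, (G.bD dp).2 = l)
    (hlit_dt : ∀ l : G.NL, G.dL l ∈ C.IDT)
    (htype : ∀ l : G.NL, C.typeOf (C.lVal (G.aL l)) = C.f ⟨G.dL l, hlit_dt l⟩)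
    (hdp : ∀ dp : G.ED, C.iLbl (G.dD dp) ≠ C.iriLbl) :
    RDFIso C G (IM1inv C (IM1 C G)) where
  eNI := Equiv.refl _
  eNL := Equiv.ofBijective _ (litNode_bijective hinj hused hdp)
  eEO := Equiv.refl _
  eED := Equiv.ofBijective _ (dpEdge_bijective hdp)
  haI r := by
    change C.valIri (propVal C (IM1 C G) (Sum.inl r) C.iriLbl) = G.aI r
    rw [propVal_iri hdp, C.valIri_iVal]
  haL l := C.valLit_lVal (G.aL l)
  hbO _ := rfl
  hbD _ := rfl
  hdI r := C.lblIri_iLbl (G.dI r)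
  hdL l := by
    change C.finv (C.typeOf (C.lVal (G.aL l))) = G.dL l
    rw [htype, C.finv_f]
  hdO e := C.lblIri_iLbl (G.dO e)
  hdD dp := C.lblIri_iLbl (G.dD dp)

end IM1

/-- Instance recovery for DM₁: if G^R is an RDF graph such that
every literal node is the target of at least one datatype-property edge,
type(α_L(l)) = f(δ(l)) for every literal node l, and no datatype-property
edge has class label 'iri', then IM₁⁻¹(IM₁(G^R)) is isomorphic to G^R. -/
theorem im1_instance_recovery (C : Ctx) (G : RDFGraph C) (hG : G.WF)
    (hlit_used : ∀ l : G.NL, ∃ dp : G.ED, (G.bD dp).2 = l)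
    (hlit_dt : ∀ l : G.NL, G.dL l ∈ C.IDT)
    (hlit_type : ∀ l : G.NL, C.typeOf (C.lVal (G.aL l)) = C.f ⟨G.dL l, hlit_dt l⟩)
    (hdp_ne_iri : ∀ dp : G.ED, C.iLbl (G.dD dp) ≠ C.iriLbl) :
    Nonempty (RDFIso C (IM1inv C (IM1 C G)) G) :=
  ⟨(IM1.recoveryIso hG.2.2.2.2.2 hlit_used hlit_dt hlit_type hdp_ne_iri).symm⟩
end

section
/- The inverse database mapping DM₁⁻¹ = (SM₁⁻¹, IM₁⁻¹) is semantics preserving on the image of DM₁: for every RDF database (S^R, G^R) with G^R ⊨ S^R (with φ injective, no class labeled 'iri', every datatype resource class used as the range of some property class, every literal node attached to some datatype-property edge, and type(α_L(l)) = f(δ(l)) for every literal node l), the RDF graph IM₁⁻¹(IM₁(G^R)) is valid with respect to the RDF graph schema SM₁⁻¹(SM₁(S^R)). -/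
/-! Validity only asks that the classes of the nodes, and the (edge class, source class,
target class) triples of the edges, occur in the schema. Passing through DM₁ and back can only
shrink these sets on the graph side and only enlarge them on the schema side. -/

namespace RDFGraph

variable {C : Ctx} (G : RDFGraph C)

def resourceClasses : Set C.Iri := Set.range G.dI

def literalClasses : Set C.Iri := Set.range G.dL

def objectPropertyTriples : Set (C.Iri × C.Iri × C.Iri) :=
  Set.range fun e => (G.dO e, G.dI (G.bO e).1, G.dI (G.bO e).2)

def datatypePropertyTriples : Set (C.Iri × C.Iri × C.Iri) :=
  Set.range fun e => (G.dD e, G.dI (G.bD e).1, G.dL (G.bD e).2)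

end RDFGraph

namespace RDFSchema

variable {C : Ctx} (S : RDFSchema C)

def classIris : Set C.Iri := Set.range S.phiN

def propertyTriples : Set (C.Iri × C.Iri × C.Iri) :=
  Set.range fun pc => (S.phiE pc, S.phiN (S.dom pc), S.phiN (S.rng pc))

end RDFSchema

theorem rdfValid_iff_subset {C : Ctx} {G : RDFGraph C} {S : RDFSchema C} :
    RDFValid C G S ↔
      G.resourceClasses ⊆ S.classIris ∧ G.literalClasses ⊆ S.classIris ∧
        G.objectPropertyTriples ⊆ S.propertyTriples ∧
          G.datatypePropertyTriples ⊆ S.propertyTriples := by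
  simp only [RDFValid, RDFGraph.resourceClasses, RDFGraph.literalClasses,
    RDFGraph.objectPropertyTriples, RDFGraph.datatypePropertyTriples, RDFSchema.classIris,
    RDFSchema.propertyTriples, Set.range_subset_iff, Set.mem_range, Prod.ext_iff, eq_comm]

section RoundTrip

variable {C : Ctx}

theorem IM1_props_eq_inr_of_ne_iriLbl {G : RDFGraph C} {n : G.NI} {p : (IM1 C G).P}
    (hp : p ∈ (IM1 C G).props (Sum.inl n)) (hne : ((IM1 C G).pv p).1 ≠ C.iriLbl) :
    ∃ dp : G.ED, p = Sum.inr dp ∧ (G.bD dp).1 = n := by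
  rcases p with _ | dp
  · exact absurd rfl hne
  · exact ⟨dp, rfl, hp⟩

theorem finv_typeOf_lVal_aL {G : RDFGraph C} (hlit_dt : ∀ l : G.NL, G.dL l ∈ C.IDT)
    (hlit_type : ∀ l : G.NL, C.typeOf (C.lVal (G.aL l)) = C.f ⟨G.dL l, hlit_dt l⟩)
    (l : G.NL) : C.finv (C.typeOf (C.lVal (G.aL l))) = G.dL l := by
  rw [hlit_type, C.finv_f]

theorem resourceClasses_IM1inv_IM1 (G : RDFGraph C) :
    (IM1inv C (IM1 C G)).resourceClasses = G.resourceClasses := by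
  simp [RDFGraph.resourceClasses, IM1inv, IM1, C.lblIri_iLbl]

theorem objectPropertyTriples_IM1inv_IM1 (G : RDFGraph C) :
    (IM1inv C (IM1 C G)).objectPropertyTriples = G.objectPropertyTriples := by
  simp [RDFGraph.objectPropertyTriples, IM1inv, IM1, C.lblIri_iLbl]

theorem literalClasses_IM1inv_IM1_subset {G : RDFGraph C}
    (hlit_dt : ∀ l : G.NL, G.dL l ∈ C.IDT)
    (hlit_type : ∀ l : G.NL, C.typeOf (C.lVal (G.aL l)) = C.f ⟨G.dL l, hlit_dt l⟩) :
    (IM1inv C (IM1 C G)).literalClasses ⊆ G.literalClasses := by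
  rintro _ ⟨⟨_, n, p, hp, hne, rfl⟩, rfl⟩
  obtain ⟨dp, rfl, -⟩ := IM1_props_eq_inr_of_ne_iriLbl hp hne
  exact ⟨(G.bD dp).2, (finv_typeOf_lVal_aL hlit_dt hlit_type _).symm⟩

theorem datatypePropertyTriples_IM1inv_IM1_subset {G : RDFGraph C}
    (hlit_dt : ∀ l : G.NL, G.dL l ∈ C.IDT)
    (hlit_type : ∀ l : G.NL, C.typeOf (C.lVal (G.aL l)) = C.f ⟨G.dL l, hlit_dt l⟩) :
    (IM1inv C (IM1 C G)).datatypePropertyTriples ⊆ G.datatypePropertyTriples := by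
  rintro _ ⟨⟨⟨n, p⟩, hp, hne⟩, rfl⟩
  obtain ⟨dp, rfl, rfl⟩ := IM1_props_eq_inr_of_ne_iriLbl hp hne
  refine ⟨dp, ?_⟩
  simp [IM1inv, IM1, C.lblIri_iLbl, finv_typeOf_lVal_aL hlit_dt hlit_type]

variable {S : RDFSchema C}

theorem classIris_subset_SM1inv_SM1 (hiri : ∀ pc : S.ES, C.iLbl (S.phiE pc) ≠ C.iriLbl)
    (hdom : ∀ pc : S.ES, S.phiN (S.dom pc) ∉ C.IDT)
    (hdt_used : ∀ rc : S.NS, S.phiN rc ∈ C.IDT → ∃ pc : S.ES, S.rng pc = rc) :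
    S.classIris ⊆ (SM1inv C (SM1 C S)).classIris := by
  rintro _ ⟨rc, rfl⟩
  by_cases hdt : S.phiN rc ∈ C.IDT
  · obtain ⟨pc, rfl⟩ := hdt_used rc hdt
    exact ⟨Sum.inl ⟨C.f ⟨_, hdt⟩, Sum.inr ⟨pc, hdom pc, hdt⟩, hiri pc, rfl⟩, C.finv_f _ hdt⟩
  · exact ⟨Sum.inr ⟨rc, hdt⟩, C.lblIri_iLbl _⟩

theorem propertyTriples_subset_SM1inv_SM1 (hiri : ∀ pc : S.ES, C.iLbl (S.phiE pc) ≠ C.iriLbl)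
    (hdom : ∀ pc : S.ES, S.phiN (S.dom pc) ∉ C.IDT) :
    S.propertyTriples ⊆ (SM1inv C (SM1 C S)).propertyTriples := by
  rintro _ ⟨pc, rfl⟩
  by_cases hdt : S.phiN (S.rng pc) ∈ C.IDT
  · refine ⟨Sum.inr ⟨(⟨S.dom pc, hdom pc⟩, Sum.inr ⟨pc, hdom pc, hdt⟩), rfl, hiri pc⟩, ?_⟩
    simp [SM1inv, SM1, C.lblIri_iLbl, C.finv_f]
  · refine ⟨Sum.inl ⟨pc, hdom pc, hdt⟩, ?_⟩
    simp [SM1inv, SM1, C.lblIri_iLbl]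

end RoundTrip

theorem dm1inv_semantics_preserving_general (C : Ctx) (S : RDFSchema C) (G : RDFGraph C)
    (hval : RDFValid C G S)
    (hiri : ∀ x : S.NS ⊕ S.ES, C.iLbl (Sum.elim S.phiN S.phiE x) ≠ C.iriLbl)
    (hdom : ∀ pc : S.ES, S.phiN (S.dom pc) ∉ C.IDT)
    (hdt_used : ∀ rc : S.NS, S.phiN rc ∈ C.IDT → ∃ pc : S.ES, S.rng pc = rc)
    (hlit_dt : ∀ l : G.NL, G.dL l ∈ C.IDT)
    (hlit_type : ∀ l : G.NL, C.typeOf (C.lVal (G.aL l)) = C.f ⟨G.dL l, hlit_dt l⟩) :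
    RDFValid C (IM1inv C (IM1 C G)) (SM1inv C (SM1 C S)) := by
  rw [rdfValid_iff_subset] at hval ⊢
  obtain ⟨hres, hlit, hobj, hdtp⟩ := hval
  have hiri' : ∀ pc : S.ES, C.iLbl (S.phiE pc) ≠ C.iriLbl := fun pc => hiri (Sum.inr pc)
  have hcls := classIris_subset_SM1inv_SM1 hiri' hdom hdt_used
  have htri := propertyTriples_subset_SM1inv_SM1 hiri' hdom
  rw [resourceClasses_IM1inv_IM1, objectPropertyTriples_IM1inv_IM1]
  exact ⟨hres.trans hcls,
    (literalClasses_IM1inv_IM1_subset hlit_dt hlit_type).trans (hlit.trans hcls),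
    hobj.trans htri,
    (datatypePropertyTriples_IM1inv_IM1_subset hlit_dt hlit_type).trans (hdtp.trans htri)⟩

/-- The inverse database mapping DM₁⁻¹ = (SM₁⁻¹, IM₁⁻¹) is
semantics preserving on the image of DM₁: for every RDF database (S^R, G^R)
with G^R ⊨ S^R (under the stated side conditions), the RDF graph
IM₁⁻¹(IM₁(G^R)) is valid with respect to the RDF graph schema
SM₁⁻¹(SM₁(S^R)). -/
theorem dm1inv_semantics_preserving (C : Ctx) (S : RDFSchema C) (G : RDFGraph C)
    (hS : S.WF) (hG : G.WF) (hval : RDFValid C G S)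
    (hiri : ∀ x : S.NS ⊕ S.ES, C.iLbl (Sum.elim S.phiN S.phiE x) ≠ C.iriLbl)
    (hdom : ∀ pc : S.ES, S.phiN (S.dom pc) ∉ C.IDT)
    (hdt_used : ∀ rc : S.NS, S.phiN rc ∈ C.IDT → ∃ pc : S.ES, S.rng pc = rc)
    (hlit_used : ∀ l : G.NL, ∃ dp : G.ED, (G.bD dp).2 = l)
    (hlit_dt : ∀ l : G.NL, G.dL l ∈ C.IDT)
    (hlit_type : ∀ l : G.NL, C.typeOf (C.lVal (G.aL l)) = C.f ⟨G.dL l, hlit_dt l⟩) :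
    RDFValid C (IM1inv C (IM1 C G)) (SM1inv C (SM1 C S)) :=
  dm1inv_semantics_preserving_general C S G hval hiri hdom hdt_used hlit_dt hlit_type
end

section
/- The database mapping DM₁ is injective up to isomorphism: if D₁ and D₂ are RDF databases (each satisfying: φ injective, no class labeled 'iri', every datatype resource class used as the range of some property class, every literal node attached to some datatype-property edge, and type(α_L(l)) = f(δ(l)) for every literal node l) such that DM₁(D₁) is isomorphic to DM₁(D₂) as property graph databases, then D₁ is isomorphic to D₂ as RDF databases. -/
/-- The side conditions on an RDF database (S^R, G^R) under which DM₁ is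
injective up to isomorphism: validity, no class with IRI 'iri',
property-class domains not datatype classes, every datatype resource class
the range of some property class, every literal node the target of some
datatype-property edge, and type(α_L(l)) = f(δ(l)) for every literal node. -/
def DBGood (C : Ctx) (S : RDFSchema C) (G : RDFGraph C) : Prop :=
  S.WF ∧ G.WF ∧ RDFValid C G S ∧
  (∀ x : S.NS ⊕ S.ES, C.iLbl (Sum.elim S.phiN S.phiE x) ≠ C.iriLbl) ∧
  (∀ pc : S.ES, S.phiN (S.dom pc) ∉ C.IDT) ∧
  (∀ rc : S.NS, S.phiN rc ∈ C.IDT → ∃ pc : S.ES, S.rng pc = rc) ∧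
  (∀ l : G.NL, ∃ dp : G.ED, (G.bD dp).2 = l) ∧
  (∃ h : ∀ l : G.NL, G.dL l ∈ C.IDT,
    ∀ l : G.NL, C.typeOf (C.lVal (G.aL l)) = C.f ⟨G.dL l, h l⟩)

/-! An isomorphism between DM₁(D₁) and DM₁(D₂) preserves labels, and only the properties (and
property types) coming from resource IRIs carry the label 'iri'. Hence it splits into bijections
matching node types with non-datatype resource classes, edge types with object property classes
and the remaining property types with datatype property classes, and likewise on instances.
Every resource class is either a node type or the range of a datatype property class, so
φ(S₁) = φ(S₂) and both schemas realise the same triples (φ pc, φ (dom pc), φ (rng pc)); since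
φ is injective this gives the schema isomorphism. On instances, resource nodes, object edges and
datatype edges are matched directly; literal nodes are recovered from property values through
the injective α_L (every literal is the target of a datatype edge), and their class is fixed by
type(α_L(l)) = f(δ(l)). -/

open Function Set

theorem Equiv.exists_eq_sumCongr {α β γ δ : Type*} (e : α ⊕ β ≃ γ ⊕ δ)
    (he : ∀ x, (e x).isLeft ↔ x.isLeft) : ∃ (f : α ≃ γ) (g : β ≃ δ), e = f.sumCongr g := by
  have he' : ∀ x, x.isRight ↔ (e x).isRight := fun x => by
    simp only [← Sum.not_isLeft, he]
  refine ⟨sumIsLeft.symm.trans ((e.subtypeEquiv fun x => (he x).symm).trans sumIsLeft),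
    sumIsRight.symm.trans ((e.subtypeEquiv he').trans sumIsRight), ?_⟩
  ext x
  cases x <;> simp [sumIsLeft, sumIsRight]

theorem Equiv.exists_apply_eq_of_range_eq {α β γ : Type*} {f : α → γ} {g : β → γ}
    (hf : Injective f) (hg : Injective g) (h : range f = range g) :
    ∃ e : α ≃ β, ∀ a, g (e a) = f a :=
  ⟨(ofInjective f hf).trans ((setCongr h).trans (ofInjective g hg).symm), fun a => by
    simp [apply_ofInjective_symm]⟩

theorem Set.range_eq_of_equiv {α β γ : Type*} (e : α ≃ β) {f : α → γ} {g : β → γ}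
    (h : ∀ a, g (e a) = f a) : range f = range g := by
  rw [← EquivLike.range_comp g e]
  exact congrArg range (funext h).symm

section

variable {C : Ctx}

namespace DBGood

variable {S S₁ S₂ : RDFSchema C} {G G₁ G₂ : RDFGraph C}

theorem phiN_injective (h : DBGood C S G) : Injective S.phiN :=
  h.1.2.2.1.comp Sum.inl_injective

theorem phiE_injective (h : DBGood C S G) : Injective S.phiE :=
  h.1.2.2.1.comp Sum.inr_injective

theorem phiE_ne_iri (h : DBGood C S G) (pc : S.ES) : C.iLbl (S.phiE pc) ≠ C.iriLbl :=
  h.2.2.2.1 (Sum.inr pc)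

theorem dom_notMem (h : DBGood C S G) (pc : S.ES) : S.phiN (S.dom pc) ∉ C.IDT :=
  h.2.2.2.2.1 pc

theorem exists_rng_eq (h : DBGood C S G) (rc : S.NS) (hrc : S.phiN rc ∈ C.IDT) :
    ∃ pc, S.rng pc = rc :=
  h.2.2.2.2.2.1 rc hrc

theorem aL_injective (h : DBGood C S G) : Injective G.aL :=
  h.2.1.2.2.2.2.2

theorem surjective_bD_snd (h : DBGood C S G) : Surjective fun dp => (G.bD dp).2 :=
  h.2.2.2.2.2.2.1

theorem dD_ne_iri (h : DBGood C S G) (dp : G.ED) : C.iLbl (G.dD dp) ≠ C.iriLbl := by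
  obtain ⟨pc, hpc, -⟩ := h.2.2.1.2.2.2 dp
  rw [hpc]
  exact h.phiE_ne_iri pc

theorem dL_eq_of_aL_eq (h₁ : DBGood C S₁ G₁) (h₂ : DBGood C S₂ G₂) {l₁ : G₁.NL} {l₂ : G₂.NL}
    (h : G₂.aL l₂ = G₁.aL l₁) : G₂.dL l₂ = G₁.dL l₁ := by
  obtain ⟨hmem₁, htype₁⟩ := h₁.2.2.2.2.2.2.2
  obtain ⟨hmem₂, htype₂⟩ := h₂.2.2.2.2.2.2.2
  have hf : C.f ⟨G₂.dL l₂, hmem₂ l₂⟩ = C.f ⟨G₁.dL l₁, hmem₁ l₁⟩ := by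
    rw [← htype₁, ← htype₂, h]
  exact congrArg Subtype.val (C.f_bij.injective hf)

end DBGood

namespace RDFSchema

def signature (S : RDFSchema C) (pc : S.ES) : C.Iri × C.Iri × C.Iri :=
  (S.phiE pc, S.phiN (S.dom pc), S.phiN (S.rng pc))

/-- The property classes that SM₁ turns into property types rather than edge types. -/
abbrev DatatypePC (S : RDFSchema C) : Type :=
  {pc : S.ES // S.phiN (S.dom pc) ∉ C.IDT ∧ S.phiN (S.rng pc) ∈ C.IDT}

theorem nonempty_iso_of_range_eq {S₁ S₂ : RDFSchema C}
    (hN₁ : Injective S₁.phiN) (hN₂ : Injective S₂.phiN)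
    (hE₁ : Injective S₁.phiE) (hE₂ : Injective S₂.phiE)
    (hN : range S₁.phiN = range S₂.phiN) (hsig : range S₁.signature = range S₂.signature) :
    Nonempty (RDFSchemaIso C S₁ S₂) := by
  have signature_injective {S : RDFSchema C} (hE : Injective S.phiE) : Injective S.signature :=
    fun _ _ h => hE (congrArg Prod.fst h)
  obtain ⟨eNS, heNS⟩ := Equiv.exists_apply_eq_of_range_eq hN₁ hN₂ hN
  obtain ⟨eES, heES⟩ := Equiv.exists_apply_eq_of_range_eq
    (signature_injective hE₁) (signature_injective hE₂) hsig
  simp only [signature, Prod.mk.injEq] at heES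
  exact ⟨{ eNS, eES
           hphiN := heNS
           hphiE := fun pc => (heES pc).1
           hdom := fun pc => hN₂ ((heES pc).2.1.trans (heNS _).symm)
           hrng := fun pc => hN₂ ((heES pc).2.2.trans (heNS _).symm) }⟩

variable (S : RDFSchema C)

theorem range_phiN_eq_union (hdom : ∀ pc, S.phiN (S.dom pc) ∉ C.IDT)
    (hrng : ∀ rc, S.phiN rc ∈ C.IDT → ∃ pc, S.rng pc = rc) :
    range S.phiN = range (fun nt : (SM1 C S).NT => S.phiN nt.1) ∪
      range (fun p : S.DatatypePC => S.phiN (S.rng p.1)) := by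
  ext i
  constructor
  · rintro ⟨rc, rfl⟩
    by_cases h : S.phiN rc ∈ C.IDT
    · obtain ⟨pc, rfl⟩ := hrng rc h
      exact Or.inr ⟨⟨pc, hdom pc, h⟩, rfl⟩
    · exact Or.inl ⟨⟨rc, h⟩, rfl⟩
  · rintro (⟨nt, rfl⟩ | ⟨p, rfl⟩) <;> exact mem_range_self _

theorem range_signature_eq_union (hdom : ∀ pc, S.phiN (S.dom pc) ∉ C.IDT) :
    range S.signature = range (fun et : (SM1 C S).ET => S.signature et.1) ∪
      range (fun p : S.DatatypePC => S.signature p.1) := by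
  ext i
  constructor
  · rintro ⟨pc, rfl⟩
    by_cases h : S.phiN (S.rng pc) ∈ C.IDT
    · exact Or.inr ⟨⟨pc, hdom pc, h⟩, rfl⟩
    · exact Or.inl ⟨⟨pc, hdom pc, h⟩, rfl⟩
  · rintro (⟨et, rfl⟩ | ⟨p, rfl⟩) <;> exact mem_range_self _

end RDFSchema

theorem sm1_tpv_fst_eq_iri_iff {S : RDFSchema C} (hi : ∀ pc, C.iLbl (S.phiE pc) ≠ C.iriLbl)
    (pt : (SM1 C S).PT) : ((SM1 C S).tpv pt).1 = C.iriLbl ↔ pt.isLeft := by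
  cases pt <;> simp [SM1, hi]

theorem im1_pv_fst_eq_iri_iff {G : RDFGraph C} (hi : ∀ dp, C.iLbl (G.dD dp) ≠ C.iriLbl)
    (p : (IM1 C G).P) : ((IM1 C G).pv p).1 = C.iriLbl ↔ p.isLeft := by
  cases p <;> simp [IM1, hi]

namespace PGSchemaIso

variable {S₁ S₂ : RDFSchema C}

theorem sm1_phiN (T : PGSchemaIso C (SM1 C S₁) (SM1 C S₂)) (nt : (SM1 C S₁).NT) :
    S₂.phiN (T.eNT nt).1 = S₁.phiN nt.1 :=
  C.iLbl_inj (T.htlab (Sum.inl nt))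

theorem sm1_signature (T : PGSchemaIso C (SM1 C S₁) (SM1 C S₂)) (et : (SM1 C S₁).ET) :
    S₂.signature (T.eET et).1 = S₁.signature et.1 := by
  have hends := T.htends et
  simp only [SM1, Prod.mk.injEq, Subtype.ext_iff] at hends
  simp only [RDFSchema.signature, Prod.mk.injEq]
  exact ⟨C.iLbl_inj (T.htlab (Sum.inr et)), (congrArg S₂.phiN hends.1).trans (T.sm1_phiN _),
    (congrArg S₂.phiN hends.2).trans (T.sm1_phiN _)⟩

theorem sm1_exists_datatypePC_equiv (T : PGSchemaIso C (SM1 C S₁) (SM1 C S₂))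
    (hi₁ : ∀ pc, C.iLbl (S₁.phiE pc) ≠ C.iriLbl) (hi₂ : ∀ pc, C.iLbl (S₂.phiE pc) ≠ C.iriLbl) :
    ∃ g : S₁.DatatypePC ≃ S₂.DatatypePC, ∀ p, S₂.signature (g p).1 = S₁.signature p.1 := by
  obtain ⟨_, g, hT⟩ := T.ePT.exists_eq_sumCongr fun pt : (SM1 C S₁).PT => by
    have h := sm1_tpv_fst_eq_iri_iff hi₂ (T.ePT pt)
    rwa [T.htpv, sm1_tpv_fst_eq_iri_iff hi₁, Iff.comm] at h
  refine ⟨g, fun p => ?_⟩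
  have hgp : T.ePT (Sum.inr p) = Sum.inr (g p) := by rw [hT]; rfl
  have htpv := T.htpv (Sum.inr p)
  rw [hgp] at htpv
  simp only [SM1, Sum.elim_inr, Prod.mk.injEq] at htpv
  have hdom : S₂.dom (g p).1 = (T.eNT ⟨S₁.dom p.1, p.2.1⟩).1 := by
    have h := (T.htprops (Sum.inl ⟨S₁.dom p.1, p.2.1⟩) (Sum.inr p)).2 rfl
    rwa [hgp] at h
  simp only [RDFSchema.signature, Prod.mk.injEq]
  exact ⟨C.iLbl_inj htpv.1, (congrArg S₂.phiN hdom).trans (T.sm1_phiN _),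
    congrArg Subtype.val (C.f_bij.injective htpv.2)⟩

theorem nonempty_rdfSchemaIso (T : PGSchemaIso C (SM1 C S₁) (SM1 C S₂)) {G₁ G₂ : RDFGraph C}
    (h₁ : DBGood C S₁ G₁) (h₂ : DBGood C S₂ G₂) :
    Nonempty (RDFSchemaIso C S₁ S₂) := by
  obtain ⟨g, hg⟩ := T.sm1_exists_datatypePC_equiv h₁.phiE_ne_iri h₂.phiE_ne_iri
  refine RDFSchema.nonempty_iso_of_range_eq h₁.phiN_injective h₂.phiN_injective
    h₁.phiE_injective h₂.phiE_injective ?_ ?_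
  · rw [S₁.range_phiN_eq_union h₁.dom_notMem h₁.exists_rng_eq,
      S₂.range_phiN_eq_union h₂.dom_notMem h₂.exists_rng_eq]
    exact congrArg₂ (· ∪ ·) (range_eq_of_equiv T.eNT T.sm1_phiN)
      (range_eq_of_equiv g fun p => congrArg (fun s => s.2.2) (hg p))
  · rw [S₁.range_signature_eq_union h₁.dom_notMem, S₂.range_signature_eq_union h₂.dom_notMem]
    exact congrArg₂ (· ∪ ·) (range_eq_of_equiv T.eET T.sm1_signature)
      (range_eq_of_equiv g hg)

end PGSchemaIso

namespace PGIso

variable {G₁ G₂ : RDFGraph C}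

theorem im1_exists_eP_eq_sumCongr (P : PGIso C (IM1 C G₁) (IM1 C G₂))
    (hi₁ : ∀ dp, C.iLbl (G₁.dD dp) ≠ C.iriLbl) (hi₂ : ∀ dp, C.iLbl (G₂.dD dp) ≠ C.iriLbl) :
    ∃ g : G₁.ED ≃ G₂.ED, P.eP = P.eN.sumCongr g := by
  obtain ⟨f, g, hP⟩ := P.eP.exists_eq_sumCongr fun p : (IM1 C G₁).P => by
    have h := im1_pv_fst_eq_iri_iff hi₂ (P.eP p)
    rwa [P.hpv, im1_pv_fst_eq_iri_iff hi₁, Iff.comm] at h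
  have hf : f = P.eN := Equiv.ext fun r => by
    have h := (P.hprops (Sum.inl r) (Sum.inl r)).2 rfl
    rwa [hP] at h
  exact ⟨g, hf ▸ hP⟩

section

variable (P : PGIso C (IM1 C G₁) (IM1 C G₂)) {g : G₁.ED ≃ G₂.ED}

theorem im1_aI (hP : P.eP = P.eN.sumCongr g) (r : G₁.NI) : G₂.aI (P.eN r) = G₁.aI r := by
  have h := P.hpv (Sum.inl r)
  rw [hP] at h
  exact C.iVal_inj (congrArg Prod.snd h)

theorem im1_dD (hP : P.eP = P.eN.sumCongr g) (dp : G₁.ED) : G₂.dD (g dp) = G₁.dD dp := by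
  have h := P.hpv (Sum.inr dp)
  rw [hP] at h
  exact C.iLbl_inj (congrArg Prod.fst h)

theorem im1_aL_bD_snd (hP : P.eP = P.eN.sumCongr g) (dp : G₁.ED) :
    G₂.aL (G₂.bD (g dp)).2 = G₁.aL (G₁.bD dp).2 := by
  have h := P.hpv (Sum.inr dp)
  rw [hP] at h
  exact C.lVal_inj (congrArg Prod.snd h)

theorem im1_bD_fst (hP : P.eP = P.eN.sumCongr g) (dp : G₁.ED) :
    (G₂.bD (g dp)).1 = P.eN (G₁.bD dp).1 := by
  have h := (P.hprops (Sum.inl (G₁.bD dp).1) (Sum.inr dp)).2 rfl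
  rwa [hP] at h

end

theorem nonempty_rdfIso {S₁ S₂ : RDFSchema C} (P : PGIso C (IM1 C G₁) (IM1 C G₂))
    (h₁ : DBGood C S₁ G₁) (h₂ : DBGood C S₂ G₂) :
    Nonempty (RDFIso C G₁ G₂) := by
  obtain ⟨g, hP⟩ := P.im1_exists_eP_eq_sumCongr h₁.dD_ne_iri h₂.dD_ne_iri
  have hrange : range G₁.aL = range G₂.aL := by
    rw [← h₁.surjective_bD_snd.range_comp, ← h₂.surjective_bD_snd.range_comp]
    exact range_eq_of_equiv g (P.im1_aL_bD_snd hP)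
  obtain ⟨eNL, heNL⟩ :=
    Equiv.exists_apply_eq_of_range_eq h₁.aL_injective h₂.aL_injective hrange
  exact ⟨{ eNI := P.eN, eNL, eEO := P.eE, eED := g
           haI := P.im1_aI hP
           haL := heNL
           hbO := P.hends
           hbD := fun dp => Prod.ext (P.im1_bD_fst hP dp)
             (h₂.aL_injective (by rw [heNL, P.im1_aL_bD_snd hP]))
           hdI := fun r => C.iLbl_inj (P.hlab (Sum.inl r))
           hdL := fun l => h₁.dL_eq_of_aL_eq h₂ (heNL l)
           hdO := fun e => C.iLbl_inj (P.hlab (Sum.inr e))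
           hdD := P.im1_dD hP }⟩

end PGIso

end

/-- The database mapping DM₁ is injective up to isomorphism: if
D₁ = (S₁, G₁) and D₂ = (S₂, G₂) are RDF databases (each satisfying the side
conditions) such that DM₁(D₁) is isomorphic to DM₁(D₂) as property graph
databases, then D₁ is isomorphic to D₂ as RDF databases. -/
theorem dm1_injective_up_to_iso (C : Ctx)
    (S₁ S₂ : RDFSchema C) (G₁ G₂ : RDFGraph C)
    (h₁ : DBGood C S₁ G₁) (h₂ : DBGood C S₂ G₂)
    (hs : Nonempty (PGSchemaIso C (SM1 C S₁) (SM1 C S₂)))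
    (hg : Nonempty (PGIso C (IM1 C G₁) (IM1 C G₂))) :
    Nonempty (RDFSchemaIso C S₁ S₂) ∧ Nonempty (RDFIso C G₁ G₂) := by
  obtain ⟨T⟩ := hs
  obtain ⟨P⟩ := hg
  exact ⟨T.nonempty_rdfSchemaIso h₁ h₂, P.nonempty_rdfIso h₁ h₂⟩
end
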